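/- For the generalized quaternion group Q_ℓ (ℓ = 2^j ≥ 8), the class function Θ₁ defined by Θ₁(g) = ℓ/4 if g = ±I (the elements ξ^{±ℓ/8} of order 4 in the cyclic part), Θ₁(g) = −2 if g = ξ^{2i}J for some i, and Θ₁(g) = 0 otherwise, has inner product ⟨Θ₁, ρ_0⟩ = 0 and ⟨Θ₁, γ_{2i+1}⟩ = 0 for all i, and ⟨Θ₁, γ_{2i}⟩ = (−1)^i for 1 ≤ i ≤ ℓ/8 − 1, where ⟨f₁,f₂⟩ = ℓ^{-1} Σ_{g∈Q_ℓ} f₁(g) conj(f₂(g)) and representations are identified with their characters. -/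

import Mathlib

open Complex Matrix

/-- primitive (2n)-th root of unity ζ = e^{2πi/(2n)} = e^{4πi/ℓ} for ℓ = 4n. -/
noncomputable def zeta (n : ℕ) : ℂ := Complex.exp (2 * Real.pi * Complex.I / (2 * n))

/-- The 2-dimensional representation γ_u of the generalized quaternion group,
with γ_u(ξ) = diag(ζ^u, ζ^{-u}) and γ_u(J) = [[0,(-1)^u],[1,0]];
here `a i` = ξ^i and `xa i` = J ξ^i. -/
noncomputable def gam (n : ℕ) (u : ℤ) : QuaternionGroup n → Matrix (Fin 2) (Fin 2) ℂ
  | .a i => !![zeta n ^ (u * (i.val : ℤ)), 0; 0, zeta n ^ (-(u * (i.val : ℤ)))]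
  | .xa i => !![0, (-1 : ℂ) ^ u * zeta n ^ (-(u * (i.val : ℤ))); zeta n ^ (u * (i.val : ℤ)), 0]

/-- character of γ_u -/
noncomputable def chi (n : ℕ) (u : ℤ) (g : QuaternionGroup n) : ℂ := Matrix.trace (gam n u g)

/-- κ₁ : ξ ↦ -1, J ↦ 1 -/
def kappa1 (n : ℕ) : QuaternionGroup n → ℂ
  | .a i => (-1) ^ i.val
  | .xa i => (-1) ^ i.val

/-- κ₂ : ξ ↦ 1, J ↦ -1 -/
def kappa2 (n : ℕ) : QuaternionGroup n → ℂ
  | .a _ => 1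
  | .xa _ => -1

/-- κ₃ : ξ ↦ -1, J ↦ -1 -/
def kappa3 (n : ℕ) : QuaternionGroup n → ℂ
  | .a i => (-1) ^ i.val
  | .xa i => -(-1) ^ i.val

/-- Θ₁ : value ℓ/4 = n at ±I = ξ^{±n/2}, value -2 at ξ^{2i}J, 0 otherwise. -/
def Theta1 (n : ℕ) : QuaternionGroup n → ℂ
  | .a i => if i = ((n / 2 : ℕ) : ZMod (2 * n)) ∨ i = -((n / 2 : ℕ) : ZMod (2 * n)) then (n : ℂ) else 0
  | .xa i => if Even i.val then -2 else 0

/-- Θ₂ : value ℓ/4 = n at ±I, value -2 at ξ^{2i+1}J, 0 otherwise. -/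
def Theta2 (n : ℕ) : QuaternionGroup n → ℂ
  | .a i => if i = ((n / 2 : ℕ) : ZMod (2 * n)) ∨ i = -((n / 2 : ℕ) : ZMod (2 * n)) then (n : ℂ) else 0
  | .xa i => if Even i.val then 0 else -2

/-- Δ(g) = det(I₂ - γ₁(g)) -/
noncomputable def Del (n : ℕ) (g : QuaternionGroup n) : ℂ := Matrix.det (1 - gam n 1 g)

/-- The L² inner product on class functions, ⟨f₁,f₂⟩ = ℓ⁻¹ Σ_g f₁(g) conj(f₂(g)). -/
noncomputable def inn (n : ℕ) [NeZero n] (f₁ f₂ : QuaternionGroup n → ℂ) : ℂ :=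
  (4 * n : ℂ)⁻¹ * ∑ g : QuaternionGroup n, f₁ g * star (f₂ g)

lemma zeta_zpow (n : ℕ) (k : ℤ) :
    zeta n ^ k = Complex.exp (k * (2 * Real.pi * Complex.I / (2 * n))) :=
  (Complex.exp_int_mul _ k).symm

lemma zeta_zpow_mul (n : ℕ) (k l : ℤ) : zeta n ^ (k * l) = (zeta n ^ k) ^ l := by
  rw [zeta_zpow, zeta_zpow, ← Complex.exp_int_mul]
  congr 1
  push_cast
  ring

lemma zeta_zpow_add (n : ℕ) (k l : ℤ) : zeta n ^ (k + l) = zeta n ^ k * zeta n ^ l := by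
  rw [zeta_zpow, zeta_zpow, zeta_zpow, ← Complex.exp_add]
  congr 1
  push_cast
  ring

lemma zeta_pow_n {n : ℕ} (hn : n ≠ 0) : zeta n ^ (n : ℤ) = -1 := by
  rw [zeta_zpow, ← Complex.exp_pi_mul_I]
  congr 1
  have h : (n : ℂ) ≠ 0 := Nat.cast_ne_zero.2 hn
  field_simp
  push_cast
  ring

lemma zeta_pow_two_n {n : ℕ} (hn : n ≠ 0) : zeta n ^ (2 * (n : ℤ)) = 1 := by
  rw [zeta_zpow, ← Complex.exp_two_pi_mul_I]
  congr 1
  have h : (n : ℂ) ≠ 0 := Nat.cast_ne_zero.2 hn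
  field_simp
  push_cast
  ring

lemma chi_xa (n : ℕ) (u : ℤ) (i : ZMod (2 * n)) : chi n u (.xa i) = 0 := by
  simp [chi, gam, Matrix.trace_fin_two]

lemma chi_a (n : ℕ) (u : ℤ) (i : ZMod (2 * n)) :
    chi n u (.a i) = zeta n ^ (u * (i.val : ℤ)) + zeta n ^ (-(u * (i.val : ℤ))) := by
  simp [chi, gam, Matrix.trace_fin_two]

def qEquiv (n : ℕ) : ZMod (2 * n) ⊕ ZMod (2 * n) ≃ QuaternionGroup n where
  toFun := fun x => match x with | .inl i => .a i | .inr i => .xa i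
  invFun := fun g => match g with | .a i => .inl i | .xa i => .inr i
  left_inv := by rintro (i|i) <;> rfl
  right_inv := by rintro (i|i) <;> rfl

lemma sum_q {n : ℕ} [NeZero n] (f : QuaternionGroup n → ℂ) :
    ∑ g : QuaternionGroup n, f g
      = ∑ i : ZMod (2 * n), f (.a i) + ∑ i : ZMod (2 * n), f (.xa i) := by
  haveI : NeZero (2 * n) := ⟨mul_ne_zero two_ne_zero (NeZero.ne n)⟩
  rw [← Equiv.sum_comp (qEquiv n) f, Fintype.sum_sum_type]
  rfl

lemma zmod_val_sum {N : ℕ} [NeZero N] (f : ℕ → ℂ) :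
    ∑ i : ZMod N, f i.val = ∑ k ∈ Finset.range N, f k := by
  rw [← Fin.sum_univ_eq_sum_range]
  refine (Fintype.sum_bijective (fun k : Fin N => ((k : ℕ) : ZMod N)) ?_ _ _ ?_).symm
  · refine (Fintype.bijective_iff_injective_and_card _).2 ⟨?_, by simp [ZMod.card]⟩
    intro a b hab
    have := congrArg ZMod.val hab
    rw [ZMod.val_cast_of_lt a.isLt, ZMod.val_cast_of_lt b.isLt] at this
    exact Fin.ext this
  · intro k; simp [ZMod.val_cast_of_lt k.isLt]

lemma sum_even_range (m : ℕ) :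
    ∑ k ∈ Finset.range (2 * m), (if Even k then (-2 : ℂ) else 0) = -2 * m := by
  induction m with
  | zero => simp
  | succ m ih =>
      have h : 2 * (m + 1) = (2 * m) + 1 + 1 := by ring
      rw [h, Finset.sum_range_succ, Finset.sum_range_succ, ih]
      have h1 : Even (2 * m) := even_two_mul m
      have h2 : ¬ Even (2 * m + 1) := by simp [Nat.even_add_one, h1]
      rw [if_pos h1, if_neg h2]
      push_cast; ring

-- supported-sum lemma for the `a`-part

lemma a_part_sum {N : ℕ} [NeZero N] (w : ZMod N → ℂ) (c : ZMod N) (v : ℂ) (hcc : c ≠ -c) :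
    ∑ i : ZMod N, (if i = c ∨ i = -c then v else 0) * w i = v * w c + v * w (-c) := by
  have : ∀ i : ZMod N,
      (if i = c ∨ i = -c then v else 0) * w i
        = (if i = c then v * w i else 0) + (if i = -c then v * w i else 0) := by
    intro i
    by_cases h1 : i = c <;> by_cases h2 : i = -c <;> simp_all
  rw [Finset.sum_congr rfl (fun i _ => this i), Finset.sum_add_distrib,
    Finset.sum_ite_eq' Finset.univ c (fun i => v * w i),
    Finset.sum_ite_eq' Finset.univ (-c) (fun i => v * w i)]
  simp

/-- ⟨Θ₁, ρ₀⟩ = 0, ⟨Θ₁, γ_{2i+1}⟩ = 0 for all i, and ⟨Θ₁, γ_{2i}⟩ = (-1)^i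
for 1 ≤ i ≤ ℓ/8 - 1. -/
theorem stmt5 (j n : ℕ) [NeZero n] (hj : 3 ≤ j) (hn : 4 * n = 2 ^ j) :
    inn n (Theta1 n) (fun _ => 1) = 0 ∧
    (∀ i : ℕ, inn n (Theta1 n) (chi n (2 * i + 1)) = 0) ∧
    (∀ i : ℕ, 1 ≤ i → i ≤ n / 2 - 1 → inn n (Theta1 n) (chi n (2 * i)) = (-1) ^ i) := by
  have hn0 : n ≠ 0 := NeZero.ne n
  obtain ⟨k, rfl⟩ : ∃ k, j = k + 3 := ⟨j - 3, by omega⟩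
  have h8 : (2 : ℕ) ^ (k + 3) = 8 * 2 ^ k := by ring
  have h9 : 1 ≤ (2 : ℕ) ^ k := Nat.one_le_two_pow
  have hm : 2 * (n / 2) = n := by omega
  have hm1 : 1 ≤ n / 2 := by omega
  haveI : NeZero (2 * n) := ⟨mul_ne_zero two_ne_zero hn0⟩
  set c : ZMod (2 * n) := ((n / 2 : ℕ) : ZMod (2 * n)) with hcdef
  have hclt : n / 2 < 2 * n := by omega
  have hcval : c.val = n / 2 := ZMod.val_cast_of_lt hclt
  have hc0 : c ≠ 0 := by
    intro h; rw [h, ZMod.val_zero] at hcval; omega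
  have hncval : (-c).val = 2 * n - n / 2 := by rw [ZMod.neg_val, if_neg hc0, hcval]
  have hcc : c ≠ -c := by
    intro h
    have h2 : c + c = 0 := by nth_rewrite 2 [h]; exact add_neg_cancel c
    have h3 : ((n : ℕ) : ZMod (2 * n)) = 0 := by
      have h35 : ((n : ℕ) : ZMod (2 * n)) = c + c := by
        rw [hcdef, ← Nat.cast_add]
        congr 1
        omega
      rw [h35, h2]
    have h4 := (ZMod.natCast_eq_zero_iff n (2 * n)).1 h3
    have := Nat.le_of_dvd (by omega) h4
    omega
  -- cast of n as twice n/2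
  have hncast : ((n : ℕ) : ℤ) = 2 * ((n / 2 : ℕ) : ℤ) := by exact_mod_cast hm.symm
  -- periodicity: value of zeta exponent at (-c).val
  have hper : ∀ u : ℤ, zeta n ^ (u * (((-c).val : ℕ) : ℤ)) = zeta n ^ (-(u * ((c.val : ℕ) : ℤ))) := by
    intro u
    rw [hncval, hcval]
    have hle : n / 2 ≤ 2 * n := by omega
    have he : u * ((2 * n - n / 2 : ℕ) : ℤ) = 2 * (n : ℤ) * u + -(u * ((n / 2 : ℕ) : ℤ)) := by
      push_cast [hle]; ring
    rw [he, zeta_zpow_add, zeta_zpow_mul, zeta_pow_two_n hn0, _root_.one_zpow, one_mul]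
  have hchi_neg : ∀ u : ℤ, chi n u (.a (-c)) = chi n u (.a c) := by
    intro u
    rw [chi_a, chi_a, hper u,
      show -(u * (((-c).val : ℕ) : ℤ)) = (-u) * (((-c).val : ℕ) : ℤ) from by ring, hper (-u),
      show -(-u * ((c.val : ℕ) : ℤ)) = u * ((c.val : ℕ) : ℤ) from by ring, add_comm]
  have h5 : ∀ k : ℤ, ((-1 : ℂ)) ^ (-k) = (-1) ^ k := by
    intro k; rw [_root_.zpow_neg, ← _root_.inv_zpow, inv_neg, inv_one]
  have hy : ∀ k : ℤ, zeta n ^ (2 * k * ((n / 2 : ℕ) : ℤ)) = (-1) ^ k := by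
    intro k
    have he : 2 * k * ((n / 2 : ℕ) : ℤ) = (n : ℤ) * k := by rw [hncast]; ring
    rw [he, zeta_zpow_mul, zeta_pow_n hn0]
  have hx : ∀ k : ℤ, zeta n ^ ((2 * k + 1) * ((n / 2 : ℕ) : ℤ))
      = (-1) ^ k * zeta n ^ ((n / 2 : ℕ) : ℤ) := by
    intro k
    have he : (2 * k + 1) * ((n / 2 : ℕ) : ℤ) = (n : ℤ) * k + ((n / 2 : ℕ) : ℤ) := by
      rw [hncast]; ring
    rw [he, zeta_zpow_add, zeta_zpow_mul, zeta_pow_n hn0]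
  refine ⟨?_, ?_, ?_⟩
  · -- ρ₀
    unfold inn
    rw [sum_q (fun g => Theta1 n g * star ((fun _ => (1:ℂ)) g))]
    simp only [Theta1, star_one]
    rw [← hcdef]
    rw [a_part_sum (fun _ => (1 : ℂ)) c (n : ℂ) hcc]
    simp only [mul_one]
    rw [zmod_val_sum (fun k => if Even k then (-2 : ℂ) else 0), sum_even_range n]
    have hz : (n : ℂ) + (n : ℂ) + -2 * (n : ℂ) = 0 := by ring
    rw [hz, mul_zero]
  · -- odd characters
    intro i
    unfold inn
    rw [sum_q (fun g => Theta1 n g * star (chi n (2 * i + 1) g))]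
    simp only [Theta1, chi_xa, star_zero, mul_zero, Finset.sum_const_zero, add_zero]
    rw [← hcdef]
    rw [a_part_sum (fun i' => star (chi n (2 * i + 1) (.a i'))) c (n : ℂ) hcc,
      hchi_neg, chi_a, hcval]
    have hX : zeta n ^ ((2 * (i : ℤ) + 1) * ((n / 2 : ℕ) : ℤ))
        + zeta n ^ (-((2 * (i : ℤ) + 1) * ((n / 2 : ℕ) : ℤ))) = 0 := by
      have he : -((2 * (i : ℤ) + 1) * ((n / 2 : ℕ) : ℤ))
          = (2 * (-((i : ℤ) + 1)) + 1) * ((n / 2 : ℕ) : ℤ) := by ring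
      rw [he, hx i, hx (-((i : ℤ) + 1)), h5 ((i : ℤ) + 1),
        zpow_add₀ (by norm_num : (-1 : ℂ) ≠ 0), zpow_one]
      ring
    rw [hX]
    simp
  · -- even characters
    intro i _ _
    unfold inn
    rw [sum_q (fun g => Theta1 n g * star (chi n (2 * i) g))]
    simp only [Theta1, chi_xa, star_zero, mul_zero, Finset.sum_const_zero, add_zero]
    rw [← hcdef]
    rw [a_part_sum (fun i' => star (chi n (2 * i) (.a i'))) c (n : ℂ) hcc,
      hchi_neg, chi_a, hcval]
    have hX : zeta n ^ ((2 * (i : ℤ)) * ((n / 2 : ℕ) : ℤ))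
        + zeta n ^ (-((2 * (i : ℤ)) * ((n / 2 : ℕ) : ℤ))) = 2 * (-1 : ℂ) ^ (i : ℤ) := by
      have he : -((2 * (i : ℤ)) * ((n / 2 : ℕ) : ℤ))
          = 2 * (-(i : ℤ)) * ((n / 2 : ℕ) : ℤ) := by ring
      rw [he, hy i, hy (-(i : ℤ)), h5 (i : ℤ)]
      ring
    rw [hX]
    have hstar : star ((2 : ℂ) * (-1 : ℂ) ^ (i : ℤ)) = 2 * (-1 : ℂ) ^ i := by
      rw [zpow_natCast]
      simp
    rw [hstar]
    have hnc : (n : ℂ) ≠ 0 := Nat.cast_ne_zero.2 hn0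
    field_simp
    ring
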